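/- arXiv:2407.16656 — 5 statements merged into one kernel-verified Lean document; each statement's English description precedes it below -/
import Mathlib

section
/- Let Z_1,...,Z_t be i.i.d. with P(Z=1|X)=1−X/n and P(Z=X|X)=X/n, and let θ ∈ (0,1). Then P(∑_{s=1}^t log Z_s < −log θ) = P(∑_{s=1}^T log Y_s < −log θ), where T ~ Bin(t, E[X]/n), (Y_s) are i.i.d. size-biased copies of X, and T is independent of (Y_s). -/
open Finset

lemma pile_sum_succ {α : Type*} [Fintype α] (t : ℕ) (H : α → (Fin t → α) → ℝ) :
    (∑ ω : Fin (t+1) → α, H (ω 0) (fun i => ω i.succ)) =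
      ∑ k : α, ∑ ω : Fin t → α, H k ω := by
  calc (∑ ω : Fin (t+1) → α, H (ω 0) (fun i => ω i.succ))
      = ∑ x : α × (Fin t → α), H x.1 x.2 :=
        (Fintype.sum_equiv (Fin.consEquiv (fun _ => α)) _ _
          (fun x => by simp [Fin.consEquiv])).symm
    _ = _ := Fintype.sum_prod_type _

lemma pile_split {α : Type*} [Fintype α] (t : ℕ) (w lg : α → ℝ) (F : ℝ → ℝ) :
    (∑ ω : Fin (t+1) → α, F (∑ s, lg (ω s)) * ∏ s, w (ω s)) =
      ∑ k : α, w k * ∑ ω : Fin t → α, F (lg k + ∑ s, lg (ω s)) * ∏ s, w (ω s) := by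
  have h : ∀ ω : Fin (t+1) → α,
      F (∑ s, lg (ω s)) * ∏ s, w (ω s) =
      w (ω 0) * (F (lg (ω 0) + ∑ i : Fin t, lg (ω i.succ)) * ∏ i : Fin t, w (ω i.succ)) := by
    intro ω
    rw [Fin.sum_univ_succ, Fin.prod_univ_succ]; ring
  rw [Finset.sum_congr rfl (fun ω _ => h ω)]
  rw [pile_sum_succ t (fun k ω => w k * (F (lg k + ∑ s, lg (ω s)) * ∏ s, w (ω s)))]
  simp [Finset.mul_sum]

lemma binom_step (t : ℕ) (a : ℝ) (g : ℕ → ℝ) :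
    ∑ m ∈ Finset.range (t+2), (((t+1).choose m : ℝ)) * a^(t+1-m) * g m
    = a * ∑ m ∈ Finset.range (t+1), ((t.choose m : ℝ)) * a^(t-m) * g m
      + ∑ m ∈ Finset.range (t+1), ((t.choose m : ℝ)) * a^(t-m) * g (m+1) := by
  rw [Finset.sum_range_succ' _ (t+1)]
  have h1 : ∀ m ∈ Finset.range (t+1),
      (((t+1).choose (m+1) : ℝ)) * a^(t+1-(m+1)) * g (m+1)
      = (t.choose m : ℝ) * a^(t-m) * g (m+1)
        + (t.choose (m+1) : ℝ) * a^(t-m) * g (m+1) := by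
    intro m _
    rw [Nat.choose_succ_succ, Nat.succ_sub_succ]
    push_cast; ring
  rw [Finset.sum_congr rfl h1, Finset.sum_add_distrib]
  have h2 : (∑ m ∈ Finset.range (t+1), (t.choose (m+1) : ℝ) * a^(t-m) * g (m+1))
      + ((t+1).choose 0 : ℝ) * a^(t+1-0) * g 0
      = a * ∑ m ∈ Finset.range (t+1), ((t.choose m : ℝ)) * a^(t-m) * g m := by
    rw [Finset.mul_sum, Finset.sum_range_succ' (fun m => a * ((t.choose m : ℝ) * a^(t-m) * g m)) t]
    rw [Finset.sum_range_succ]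
    simp only [Nat.choose_succ_self, Nat.cast_zero, zero_mul, mul_zero, add_zero,
      Nat.choose_zero_right, Nat.cast_one, one_mul, Nat.sub_zero]
    congr 1
    · refine Finset.sum_congr rfl (fun m hm => ?_)
      rw [Finset.mem_range] at hm
      have : t - m = (t - (m+1)) + 1 := by omega
      rw [this, pow_succ]; ring
    · rw [pow_succ]; ring
  rw [← h2]; ring

lemma pile_main (n : ℕ) (hn : 2 ≤ n) (w : ℕ → ℝ) (t : ℕ) (F : ℝ → ℝ) :
    (∑ ω : Fin t → (Finset.Icc 1 n : Finset ℕ),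
        F (∑ s : Fin t, Real.log ((ω s : ℕ) : ℝ)) * ∏ s : Fin t, w (ω s : ℕ)) =
      ∑ m ∈ Finset.range (t+1), ((t.choose m : ℝ)) * (w 1)^(t-m) *
        (∑ y : Fin m → (Finset.Icc 2 n : Finset ℕ),
          F (∑ s : Fin m, Real.log ((y s : ℕ) : ℝ)) * ∏ s : Fin m, w (y s : ℕ)) := by
  have hIcc' : (Finset.Icc 1 n).erase 1 = Finset.Icc 2 n := by
    ext k; simp only [Finset.mem_Icc, Finset.mem_erase]; omega
  induction t generalizing F with
  | zero => simp
  | succ t ih =>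
    rw [pile_split (α := ((Finset.Icc 1 n : Finset ℕ) : Type)) t (fun k => w (k : ℕ)) (fun k => Real.log ((k : ℕ) : ℝ)) F]
    rw [show (∑ k : (Finset.Icc 1 n : Finset ℕ),
        w (k:ℕ) * ∑ ω : Fin t → (Finset.Icc 1 n : Finset ℕ),
          F (Real.log ((k:ℕ):ℝ) + ∑ s, Real.log ((ω s : ℕ):ℝ)) * ∏ s, w (ω s : ℕ)) =
      ∑ k ∈ Finset.Icc 1 n,
        w k * ∑ ω : Fin t → (Finset.Icc 1 n : Finset ℕ),
          F (Real.log (k:ℝ) + ∑ s, Real.log ((ω s : ℕ):ℝ)) * ∏ s, w (ω s : ℕ)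
      from Finset.sum_coe_sort (Finset.Icc 1 n)
        (fun k => w k * ∑ ω : Fin t → (Finset.Icc 1 n : Finset ℕ),
          F (Real.log (k:ℝ) + ∑ s, Real.log ((ω s : ℕ):ℝ)) * ∏ s, w (ω s : ℕ))]
    rw [← Finset.add_sum_erase (Finset.Icc 1 n) _ (Finset.mem_Icc.mpr ⟨le_refl 1, by omega⟩),
      hIcc']
    simp only [Nat.cast_one, Real.log_one, zero_add]
    rw [ih F]
    have h2 : ∀ k ∈ Finset.Icc 2 n,
        (w k * ∑ ω : Fin t → (Finset.Icc 1 n : Finset ℕ),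
          F (Real.log (k:ℝ) + ∑ s, Real.log ((ω s : ℕ):ℝ)) * ∏ s, w (ω s : ℕ))
        = ∑ m ∈ Finset.range (t+1), ((t.choose m : ℝ)) * (w 1)^(t-m) *
            (w k * ∑ y : Fin m → (Finset.Icc 2 n : Finset ℕ),
              F (Real.log (k:ℝ) + ∑ s, Real.log ((y s : ℕ):ℝ)) * ∏ s, w (y s : ℕ)) := by
      intro k _
      rw [ih (fun x => F (Real.log (k:ℝ) + x)), Finset.mul_sum]
      exact Finset.sum_congr rfl (fun m _ => by ring)
    rw [Finset.sum_congr rfl h2, Finset.sum_comm]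
    have h3 : ∀ m ∈ Finset.range (t+1),
        (∑ k ∈ Finset.Icc 2 n, ((t.choose m : ℝ)) * (w 1)^(t-m) *
            (w k * ∑ y : Fin m → (Finset.Icc 2 n : Finset ℕ),
              F (Real.log (k:ℝ) + ∑ s, Real.log ((y s : ℕ):ℝ)) * ∏ s, w (y s : ℕ)))
        = ((t.choose m : ℝ)) * (w 1)^(t-m) *
            (∑ y : Fin (m+1) → (Finset.Icc 2 n : Finset ℕ),
              F (∑ s, Real.log ((y s : ℕ):ℝ)) * ∏ s, w (y s : ℕ)) := by
      intro m _
      rw [pile_split (α := ((Finset.Icc 2 n : Finset ℕ) : Type)) m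
        (fun k => w (k : ℕ)) (fun k => Real.log ((k : ℕ) : ℝ)) F]
      rw [show (∑ k : (Finset.Icc 2 n : Finset ℕ),
          w (k:ℕ) * ∑ y : Fin m → (Finset.Icc 2 n : Finset ℕ),
            F (Real.log ((k:ℕ):ℝ) + ∑ s, Real.log ((y s : ℕ):ℝ)) * ∏ s, w (y s : ℕ)) =
        ∑ k ∈ Finset.Icc 2 n,
          w k * ∑ y : Fin m → (Finset.Icc 2 n : Finset ℕ),
            F (Real.log (k:ℝ) + ∑ s, Real.log ((y s : ℕ):ℝ)) * ∏ s, w (y s : ℕ)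
        from Finset.sum_coe_sort (Finset.Icc 2 n)
          (fun k => w k * ∑ y : Fin m → (Finset.Icc 2 n : Finset ℕ),
            F (Real.log (k:ℝ) + ∑ s, Real.log ((y s : ℕ):ℝ)) * ∏ s, w (y s : ℕ))]
      rw [Finset.mul_sum]
    rw [Finset.sum_congr rfl h3]
    rw [binom_step t (w 1) (fun m => ∑ y : Fin m → (Finset.Icc 2 n : Finset ℕ),
        F (∑ s, Real.log ((y s : ℕ):ℝ)) * ∏ s, w (y s : ℕ))]

/-- Representation of the size of a typical pile: with `Z_1,…,Z_t` i.i.d. with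
`P(Z=1∣X)=1−X/n`, `P(Z=X∣X)=X/n`, and `θ ∈ (0,1)`,
`P(∑_{s≤t} log Z_s < −log θ) = P(∑_{s≤T} log Y_s < −log θ)`, where
`T ~ Bin(t, E[X]/n)` is independent of the i.i.d. size-biased variables `Y_s`
with law `pY k = k·p(k)/E[X]`. -/
theorem repeated_block_averages_pile_size_representation
    (n t : ℕ) (hn : 2 ≤ n) (p : ℕ → ℝ)
    (hp : ∀ k, 0 ≤ p k)
    (hsupp : ∀ k, k ∉ Finset.Icc 2 n → p k = 0)
    (hsum : ∑ k ∈ Finset.Icc 2 n, p k = 1)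
    (EX : ℝ) (hEX : EX = ∑ k ∈ Finset.Icc 2 n, (k : ℝ) * p k)
    (q : ℝ) (hq : q = EX / n)
    (pZ : ℕ → ℝ)
    (hpZ : ∀ k, pZ k = if k = 1 then 1 - q else (k : ℝ) * p k / n)
    (pY : ℕ → ℝ) (hpY : ∀ k, pY k = (k : ℝ) * p k / EX)
    (θ : ℝ) (hθ : θ ∈ Set.Ioo (0 : ℝ) 1) :
    (∑ ω : Fin t → (Finset.Icc 1 n : Finset ℕ),
        if (∑ s : Fin t, Real.log ((ω s : ℕ) : ℝ)) < -Real.log θ then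
          ∏ s : Fin t, pZ (ω s : ℕ)
        else 0) =
      ∑ m ∈ Finset.range (t + 1),
        ((t.choose m : ℝ) * q ^ m * (1 - q) ^ (t - m)) *
          (∑ y : Fin m → (Finset.Icc 2 n : Finset ℕ),
            if (∑ s : Fin m, Real.log ((y s : ℕ) : ℝ)) < -Real.log θ then
              ∏ s : Fin m, pY (y s : ℕ)
            else 0) := by
  have hEXpos : 0 < EX := by
    have h2 : (2:ℝ) = ∑ k ∈ Finset.Icc 2 n, 2 * p k := by
      rw [← Finset.mul_sum, hsum, mul_one]
    have hle : (2:ℝ) ≤ EX := by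
      rw [hEX, h2]
      refine Finset.sum_le_sum (fun k hk => ?_)
      have : (2:ℝ) ≤ (k:ℝ) := by exact_mod_cast (Finset.mem_Icc.mp hk).1
      exact mul_le_mul_of_nonneg_right this (hp k)
    linarith
  have hn0 : (n:ℝ) ≠ 0 := by positivity
  have hqpY : ∀ k : ℕ, 2 ≤ k → pZ k = q * pY k := by
    intro k hk
    rw [hpZ, if_neg (by omega), hpY, hq]
    field_simp
  set F : ℝ → ℝ := fun x => if x < -Real.log θ then (1:ℝ) else 0 with hF
  calc (∑ ω : Fin t → (Finset.Icc 1 n : Finset ℕ),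
        if (∑ s : Fin t, Real.log ((ω s : ℕ) : ℝ)) < -Real.log θ then
          ∏ s : Fin t, pZ (ω s : ℕ)
        else 0)
      = ∑ ω : Fin t → (Finset.Icc 1 n : Finset ℕ),
          F (∑ s : Fin t, Real.log ((ω s : ℕ) : ℝ)) * ∏ s : Fin t, pZ (ω s : ℕ) := by
        refine Finset.sum_congr rfl (fun ω _ => ?_)
        simp only [hF, ite_mul, one_mul, zero_mul]
    _ = ∑ m ∈ Finset.range (t+1), ((t.choose m : ℝ)) * (pZ 1)^(t-m) *
          (∑ y : Fin m → (Finset.Icc 2 n : Finset ℕ),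
            F (∑ s : Fin m, Real.log ((y s : ℕ) : ℝ)) * ∏ s : Fin m, pZ (y s : ℕ)) :=
        pile_main n hn pZ t F
    _ = _ := by
        refine Finset.sum_congr rfl (fun m _ => ?_)
        have hS : (∑ y : Fin m → (Finset.Icc 2 n : Finset ℕ),
            F (∑ s : Fin m, Real.log ((y s : ℕ) : ℝ)) * ∏ s : Fin m, pZ (y s : ℕ))
            = q^m * ∑ y : Fin m → (Finset.Icc 2 n : Finset ℕ),
                (if (∑ s : Fin m, Real.log ((y s : ℕ) : ℝ)) < -Real.log θ then
                  ∏ s : Fin m, pY (y s : ℕ) else 0) := by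
          rw [Finset.mul_sum]
          refine Finset.sum_congr rfl (fun y _ => ?_)
          have hprod : (∏ s : Fin m, pZ (y s : ℕ)) = q^m * ∏ s : Fin m, pY (y s : ℕ) := by
            rw [Finset.prod_congr rfl
                (fun s _ => hqpY (y s : ℕ) (Finset.mem_Icc.mp (y s).2).1),
              Finset.prod_mul_distrib, Finset.prod_const, Finset.card_univ,
              Fintype.card_fin]
          rw [hprod]
          simp only [hF]
          split_ifs <;> ring
        rw [hS, hpZ 1, if_pos rfl]
        ring
end

section
/- Let η, w : V → [0,∞) with w ≤ η pointwise, ∑_x η(x) = 1, |w| = ∑_x w(x), and suppose every positive entry of w is at least a/n for some a > 1. If |w| > 1 − ε for ε ∈ (0,1), then the total variation distance ‖η − π‖_TV = ∑_x [η(x) − 1/n]_+ ≥ 1 − ε − 1/a, where π is the uniform distribution on V, |V| = n. -/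
/-- Deterministic lower bound on the total variation distance: if `w ≤ η`, `η` is a
probability vector, every positive entry of `w` is at least `a/n` with `a > 1`, and
`|w| > 1 − ε`, then `‖η − π‖_TV = ∑ [η(x) − 1/n]₊ ≥ 1 − ε − 1/a`. -/
theorem repeated_block_averages_tv_lower_bound
    (V : Type*) [Fintype V] (n : ℕ) (hcard : Fintype.card V = n) (hn : 0 < n)
    (η w : V → ℝ) (a ε : ℝ) (ha : 1 < a) (hε : ε ∈ Set.Ioo (0 : ℝ) 1)
    (hwnn : ∀ x, 0 ≤ w x)
    (hwη : ∀ x, w x ≤ η x)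
    (hηsum : ∑ x, η x = 1)
    (hatom : ∀ x, w x ≠ 0 → a / n ≤ w x)
    (hwmass : 1 - ε < ∑ x, w x) :
    ∑ x, max (η x - 1 / n) 0 ≥ 1 - ε - 1 / a := by
  have ha0 : 0 < a := lt_trans one_pos ha
  have hnpos : (0:ℝ) < n := by exact_mod_cast hn
  have key : ∑ x, (1 - 1/a) * w x ≤ ∑ x, max (η x - 1 / n) 0 := by
    apply Finset.sum_le_sum
    intro x _
    by_cases hx : w x = 0
    · simp [hx, le_max_right]
    · have h1 : a / n ≤ w x := hatom x hx
      have h1' : a ≤ w x * n := (div_le_iff₀ hnpos).mp h1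
      have h2 : 1 / (n:ℝ) ≤ w x / a := by
        rw [div_le_div_iff₀ hnpos ha0]; nlinarith
      have h3 : (1 - 1/a) * w x ≤ η x - 1/n := by
        have := hwη x
        have : w x - w x / a ≤ η x - 1/n := by linarith
        calc (1 - 1/a) * w x = w x - w x / a := by ring
          _ ≤ η x - 1/n := this
      exact le_trans h3 (le_max_left _ _)
  have hsum : ∑ x, (1 - 1/a) * w x = (1 - 1/a) * ∑ x, w x := by
    rw [Finset.mul_sum]
  have hfac : (0:ℝ) < 1 - 1/a := by
    have : 1/a < 1 := by rw [div_lt_one ha0]; exact ha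
    linarith
  have h4 : (1 - 1/a) * (1 - ε) ≤ (1 - 1/a) * ∑ x, w x :=
    mul_le_mul_of_nonneg_left hwmass.le hfac.le
  have h5 : 1 - ε - 1/a ≤ (1 - 1/a) * (1 - ε) := by
    have hεa : 0 ≤ ε / a := div_nonneg hε.1.le ha0.le
    have : (1 - 1/a) * (1 - ε) = 1 - ε - 1/a + ε/a := by field_simp; ring
    linarith
  rw [hsum] at key
  linarith
end

section
/- Averaging a probability vector over a uniformly random block of random size X decreases the expected squared L² distance to uniform by exactly the factor 1 − 1/t_rel: E[‖(Ψ_A η)/π − 1‖_2²] = (1 − (E[X]−1)/(n−1))·‖η/π − 1‖_2², where A is a uniformly random subset of V of size X. -/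
open Finset

lemma count_mem_subsets {V : Type*} [DecidableEq V] (s : Finset V) (x : V) (hx : x ∈ s)
    (k : ℕ) :
    ((s.powersetCard (k+1)).filter (fun B => x ∈ B)).card =
      ((s.erase x).powersetCard k).card := by
  refine Finset.card_bij' (fun B _ => B.erase x) (fun A _ => insert x A) ?_ ?_ ?_ ?_
  · intro B hB
    simp only [mem_filter, mem_powersetCard] at hB
    obtain ⟨⟨hBs, hBc⟩, hxB⟩ := hB
    rw [mem_powersetCard]
    exact ⟨Finset.erase_subset_erase x hBs, by rw [Finset.card_erase_of_mem hxB, hBc]; omega⟩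
  · intro A hA
    rw [mem_powersetCard] at hA
    obtain ⟨hAs, hAc⟩ := hA
    have hxA : x ∉ A := fun h => (Finset.mem_erase.mp (hAs h)).1 rfl
    simp only [mem_filter, mem_powersetCard]
    refine ⟨⟨?_, ?_⟩, Finset.mem_insert_self x A⟩
    · intro y hy
      rcases Finset.mem_insert.mp hy with rfl | hy
      · exact hx
      · exact Finset.mem_of_mem_erase (hAs hy)
    · rw [Finset.card_insert_of_notMem hxA, hAc]
  · intro B hB
    simp only [mem_filter] at hB
    exact Finset.insert_erase hB.2
  · intro A hA
    rw [mem_powersetCard] at hA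
    have hxA : x ∉ A := fun h => (Finset.mem_erase.mp (hA.1 h)).1 rfl
    exact Finset.erase_insert hxA

lemma count_pair_subsets {V : Type*} [DecidableEq V] (s : Finset V) (x y : V) (hx : x ∈ s)
    (hy : y ∈ s) (hxy : x ≠ y) (k : ℕ) :
    ((s.powersetCard (k+2)).filter (fun B => x ∈ B ∧ y ∈ B)).card =
      (((s.erase x).erase y).powersetCard k).card := by
  have h1 : ((s.powersetCard (k+2)).filter (fun B => x ∈ B ∧ y ∈ B))
      = (((s.powersetCard (k+2)).filter (fun B => x ∈ B)).filter (fun B => y ∈ B)) := by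
    rw [Finset.filter_filter]
  rw [h1]
  have hb : (((s.powersetCard (k+2)).filter (fun B => x ∈ B)).filter (fun B => y ∈ B)).card
      = (((s.erase x).powersetCard (k+1)).filter (fun B => y ∈ B)).card := by
    refine Finset.card_bij' (fun B _ => B.erase x) (fun A _ => insert x A) ?_ ?_ ?_ ?_
    · intro B hB
      simp only [mem_filter, mem_powersetCard] at hB ⊢
      obtain ⟨⟨⟨hBs, hBc⟩, hxB⟩, hyB⟩ := hB
      refine ⟨⟨Finset.erase_subset_erase x hBs, ?_⟩, Finset.mem_erase.mpr ⟨hxy.symm, hyB⟩⟩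
      rw [Finset.card_erase_of_mem hxB, hBc]; omega
    · intro A hA
      simp only [mem_filter, mem_powersetCard] at hA ⊢
      obtain ⟨⟨hAs, hAc⟩, hyA⟩ := hA
      have hxA : x ∉ A := fun h => (Finset.mem_erase.mp (hAs h)).1 rfl
      refine ⟨⟨⟨?_, ?_⟩, Finset.mem_insert_self x A⟩, Finset.mem_insert_of_mem hyA⟩
      · intro z hz
        rcases Finset.mem_insert.mp hz with rfl | hz
        · exact hx
        · exact Finset.mem_of_mem_erase (hAs hz)
      · rw [Finset.card_insert_of_notMem hxA, hAc]
    · intro B hB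
      simp only [mem_filter] at hB
      exact Finset.insert_erase hB.1.2
    · intro A hA
      simp only [mem_filter, mem_powersetCard] at hA
      have hxA : x ∉ A := fun h => (Finset.mem_erase.mp (hA.1.1 h)).1 rfl
      exact Finset.erase_insert hxA
  rw [hb, count_mem_subsets _ y (Finset.mem_erase.mpr ⟨hxy.symm, hy⟩) k]

section Aux
variable {V : Type*} [Fintype V] [DecidableEq V]

lemma aux_inner (n k : ℕ) (hk1 : 1 ≤ k) (η : V → ℝ) (B : Finset V) (hBk : B.card = k) :
    ∑ x, ((n : ℝ) * (if x ∈ B then (∑ y ∈ B, η y) / (B.card : ℝ) else η x) - 1) ^ 2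
      = (∑ x, ((n:ℝ) * η x - 1) ^ 2) - (∑ x ∈ B, ((n:ℝ) * η x - 1) ^ 2)
        + (∑ x ∈ B, ((n:ℝ) * η x - 1)) ^ 2 / (k : ℝ) := by
  set f : V → ℝ := fun x => (n : ℝ) * η x - 1 with hf
  have hk0 : (k : ℝ) ≠ 0 := by positivity
  have hsB : ∑ y ∈ B, f y = (n : ℝ) * (∑ y ∈ B, η y) - k := by
    simp [hf, Finset.sum_sub_distrib, ← Finset.mul_sum, hBk]
  have havg : (n:ℝ) * ((∑ y ∈ B, η y) / (B.card : ℝ)) - 1 = (∑ y ∈ B, f y) / (k:ℝ) := by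
    rw [hsB, hBk]; field_simp
  have step : ∀ x : V, ((n : ℝ) * (if x ∈ B then (∑ y ∈ B, η y) / (B.card : ℝ) else η x) - 1) ^ 2
      = if x ∈ B then ((∑ y ∈ B, f y) / (k:ℝ)) ^ 2 else f x ^ 2 := by
    intro x; split_ifs with h
    · rw [← havg]
    · rfl
  rw [Finset.sum_congr rfl (fun x _ => step x), Finset.sum_ite]
  have hfB : Finset.univ.filter (fun x => x ∈ B) = B := by ext z; simp
  rw [hfB, Finset.sum_const, hBk]
  have hnot : ∑ x ∈ Finset.univ.filter (fun x => x ∉ B), f x ^ 2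
      = (∑ x, f x ^ 2) - ∑ x ∈ B, f x ^ 2 := by
    have := Finset.sum_filter_add_sum_filter_not Finset.univ (fun x => x ∈ B) (fun x => f x ^ 2)
    rw [hfB] at this
    linarith
  rw [hnot]
  show _ = (∑ x, f x ^ 2) - (∑ x ∈ B, f x ^ 2) + (∑ x ∈ B, f x) ^ 2 / (k : ℝ)
  rw [nsmul_eq_mul, div_pow, sq (k:ℝ), mul_div_assoc', mul_div_mul_left _ _ hk0]
  ring

lemma aux_T1 (s : Finset (Finset V)) (g : V → ℝ)
    (c1 : ℕ) (hc1 : ∀ x : V, (s.filter (fun B => x ∈ B)).card = c1) :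
    ∑ B ∈ s, ∑ x ∈ B, g x = (c1 : ℝ) * ∑ x, g x := by
  have h1 : ∀ B ∈ s, ∑ x ∈ B, g x = ∑ x, if x ∈ B then g x else 0 := by
    intro B _; rw [Finset.sum_ite_mem, Finset.univ_inter]
  rw [Finset.sum_congr rfl h1, Finset.sum_comm]
  have h2 : ∀ x : V, ∑ B ∈ s, (if x ∈ B then g x else 0) = (c1 : ℝ) * g x := by
    intro x
    rw [← Finset.sum_filter, Finset.sum_const, hc1 x, nsmul_eq_mul]
  rw [Finset.sum_congr rfl (fun x _ => h2 x), ← Finset.mul_sum]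

lemma aux_T2 (s : Finset (Finset V)) (f : V → ℝ)
    (hf0 : ∑ x, f x = 0)
    (c1 c2 : ℕ) (hc1 : ∀ x : V, (s.filter (fun B => x ∈ B)).card = c1)
    (hc2 : ∀ x y : V, x ≠ y → (s.filter (fun B => x ∈ B ∧ y ∈ B)).card = c2) :
    ∑ B ∈ s, (∑ x ∈ B, f x) ^ 2 = ((c1 : ℝ) - c2) * ∑ x, f x ^ 2 := by
  have hsq : ∀ B ∈ s, (∑ x ∈ B, f x) ^ 2
      = ∑ x, ∑ y, if x ∈ B ∧ y ∈ B then f x * f y else 0 := by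
    intro B _
    rw [sq, Finset.sum_mul_sum]
    have e1 : ∀ x ∈ B, ∑ y ∈ B, f x * f y = ∑ y, if y ∈ B then f x * f y else 0 := by
      intro x _; rw [Finset.sum_ite_mem, Finset.univ_inter]
    rw [Finset.sum_congr rfl e1]
    have e2 : ∑ x ∈ B, (∑ y, if y ∈ B then f x * f y else 0)
        = ∑ x, if x ∈ B then (∑ y, if y ∈ B then f x * f y else 0) else 0 := by
      rw [Finset.sum_ite_mem, Finset.univ_inter]
    rw [e2]
    refine Finset.sum_congr rfl fun x _ => ?_
    split_ifs with h
    · refine Finset.sum_congr rfl fun y _ => ?_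
      simp [h]
    · symm
      refine Finset.sum_eq_zero fun y _ => ?_
      simp [h]
  rw [Finset.sum_congr rfl hsq, Finset.sum_comm]
  have hswap : ∀ x : V, ∑ B ∈ s, ∑ y, (if x ∈ B ∧ y ∈ B then f x * f y else 0)
      = ∑ y, ∑ B ∈ s, (if x ∈ B ∧ y ∈ B then f x * f y else 0) := fun x => Finset.sum_comm
  rw [Finset.sum_congr rfl (fun x _ => hswap x)]
  have hinner : ∀ x y : V, ∑ B ∈ s, (if x ∈ B ∧ y ∈ B then f x * f y else 0)
      = ((s.filter (fun B => x ∈ B ∧ y ∈ B)).card : ℝ) * (f x * f y) := by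
    intro x y
    rw [← Finset.sum_filter, Finset.sum_const, nsmul_eq_mul]
  rw [Finset.sum_congr rfl (fun x _ => Finset.sum_congr rfl (fun y _ => hinner x y))]
  have hx : ∀ x : V, ∑ y, ((s.filter (fun B => x ∈ B ∧ y ∈ B)).card : ℝ) * (f x * f y)
      = ((c1 : ℝ) - c2) * f x ^ 2 := by
    intro x
    rw [← Finset.sum_erase_add _ _ (Finset.mem_univ x)]
    have hdiag : ((s.filter (fun B => x ∈ B ∧ x ∈ B)).card : ℝ) = (c1 : ℝ) := by
      have he : s.filter (fun B => x ∈ B ∧ x ∈ B) = s.filter (fun B => x ∈ B) := by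
        apply Finset.filter_congr; intro B _; simp
      rw [he, hc1 x]
    have hoff : ∀ y ∈ Finset.univ.erase x,
        ((s.filter (fun B => x ∈ B ∧ y ∈ B)).card : ℝ) * (f x * f y)
          = (c2 : ℝ) * (f x * f y) := by
      intro y hy
      rw [hc2 x y (fun h => (Finset.mem_erase.mp hy).1 h.symm)]
    rw [Finset.sum_congr rfl hoff, hdiag, ← Finset.mul_sum, ← Finset.mul_sum]
    have hrest : ∑ y ∈ Finset.univ.erase x, f y = - f x := by
      have := Finset.sum_erase_add Finset.univ f (Finset.mem_univ x)
      rw [hf0] at this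
      linarith
    rw [hrest]
    ring
  rw [Finset.sum_congr rfl (fun x _ => hx x), ← Finset.mul_sum]

lemma perk_aux (m j : ℕ) (hcard : Fintype.card V = m + 2) (hjm : j ≤ m)
    (η : V → ℝ) (hη : ∑ x, η x = 1) :
    ((((Finset.univ : Finset V).powersetCard (j+2)).card : ℝ))⁻¹ *
        ∑ B ∈ (Finset.univ : Finset V).powersetCard (j+2),
          (1 / ((m+2 : ℕ) : ℝ)) * ∑ x, (((m+2:ℕ) : ℝ) *
              (if x ∈ B then (∑ y ∈ B, η y) / (B.card : ℝ) else η x) - 1) ^ 2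
      = ((((m+2:ℕ) : ℝ) - ((j+2:ℕ):ℝ)) / (((m+2:ℕ):ℝ) - 1)) *
          ((1 / ((m+2:ℕ):ℝ)) * ∑ x, (((m+2:ℕ):ℝ) * η x - 1) ^ 2) := by
  classical
  set f : V → ℝ := fun x => ((m+2:ℕ):ℝ) * η x - 1 with hf
  set S : ℝ := ∑ x, f x ^ 2 with hS
  have hf0 : ∑ x, f x = 0 := by
    simp only [hf, Finset.sum_sub_distrib, ← Finset.mul_sum, hη, Finset.sum_const,
      Finset.card_univ, hcard, nsmul_eq_mul, mul_one]
    push_cast; ring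
  set s := (Finset.univ : Finset V).powersetCard (j+2) with hs
  have hC : s.card = (m+2).choose (j+2) := by
    rw [hs, Finset.card_powersetCard, Finset.card_univ, hcard]
  have hc1 : ∀ x : V, (s.filter (fun B => x ∈ B)).card = (m+1).choose (j+1) := by
    intro x
    rw [hs, show j + 2 = (j+1) + 1 by ring,
      count_mem_subsets Finset.univ x (Finset.mem_univ x) (j+1),
      Finset.card_powersetCard, Finset.card_erase_of_mem (Finset.mem_univ x),
      Finset.card_univ, hcard]
    congr 1
  have hc2 : ∀ x y : V, x ≠ y → (s.filter (fun B => x ∈ B ∧ y ∈ B)).card = m.choose j := by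
    intro x y hxy
    rw [hs, count_pair_subsets Finset.univ x y (Finset.mem_univ x) (Finset.mem_univ y) hxy j,
      Finset.card_powersetCard,
      Finset.card_erase_of_mem (Finset.mem_erase.mpr ⟨hxy.symm, Finset.mem_univ y⟩),
      Finset.card_erase_of_mem (Finset.mem_univ x), Finset.card_univ, hcard]
    congr 1
  have hinner : ∀ B ∈ s, (1 / ((m+2 : ℕ) : ℝ)) * ∑ x, (((m+2:ℕ) : ℝ) *
        (if x ∈ B then (∑ y ∈ B, η y) / (B.card : ℝ) else η x) - 1) ^ 2
      = (1 / ((m+2 : ℕ) : ℝ)) *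
          (S - (∑ x ∈ B, f x ^ 2) + (∑ x ∈ B, f x) ^ 2 / ((j+2 : ℕ) : ℝ)) := by
    intro B hB
    rw [hs, Finset.mem_powersetCard] at hB
    rw [aux_inner (m+2) (j+2) (by omega) η B hB.2]
  rw [Finset.sum_congr rfl hinner, ← Finset.mul_sum]
  have hsum1 : ∑ B ∈ s, (S - (∑ x ∈ B, f x ^ 2) + (∑ x ∈ B, f x) ^ 2 / ((j+2 : ℕ) : ℝ))
      = (s.card : ℝ) * S - ((m+1).choose (j+1) : ℝ) * S
        + (((m+1).choose (j+1) : ℝ) - (m.choose j : ℝ)) * S / ((j+2 : ℕ) : ℝ) := by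
    rw [Finset.sum_add_distrib, Finset.sum_sub_distrib, Finset.sum_const, ← Finset.sum_div,
      aux_T1 s (fun x => f x ^ 2) _ hc1, aux_T2 s f hf0 _ _ hc1 hc2, nsmul_eq_mul, ← hS]
  rw [hsum1, hC]
  -- final arithmetic
  have hM2 : ((m:ℝ)+2) ≠ 0 := by positivity
  have hM1 : ((m:ℝ)+1) ≠ 0 := by positivity
  have hJ2 : ((j:ℝ)+2) ≠ 0 := by positivity
  have hCne : (((m+2).choose (j+2) : ℕ) : ℝ) ≠ 0 := by
    exact_mod_cast (Nat.choose_pos (by omega : j + 2 ≤ m + 2)).ne'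
  have RC1 : ((m:ℝ)+2) * ((m+1).choose (j+1) : ℝ) = ((j:ℝ)+2) * ((m+2).choose (j+2) : ℝ) := by
    have h : ((m+2) * (m+1).choose (j+1) : ℕ) = ((m+2).choose (j+2) * (j+2) : ℕ) :=
      Nat.add_one_mul_choose_eq (m+1) (j+1)
    have h2 := congrArg (fun t : ℕ => (t : ℝ)) h
    push_cast at h2
    linear_combination h2
  have RC2 : ((m:ℝ)+1) * (m.choose j : ℝ) = ((j:ℝ)+1) * ((m+1).choose (j+1) : ℝ) := by
    have h : ((m+1) * m.choose j : ℕ) = ((m+1).choose (j+1) * (j+1) : ℕ) :=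
      Nat.add_one_mul_choose_eq m j
    have h2 := congrArg (fun t : ℕ => (t : ℝ)) h
    push_cast at h2
    linear_combination h2
  have hb : ((m+1).choose (j+1) : ℝ) = ((j:ℝ)+2) * ((m+2).choose (j+2) : ℝ) / ((m:ℝ)+2) := by
    rw [eq_div_iff hM2]
    linear_combination RC1
  have hcval : (m.choose j : ℝ) = ((j:ℝ)+1) * ((m+1).choose (j+1) : ℝ) / ((m:ℝ)+1) := by
    rw [eq_div_iff hM1]
    linear_combination RC2
  have hE : ((m+2).choose (j+2) : ℝ) * S - ((m+1).choose (j+1) : ℝ) * S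
        + (((m+1).choose (j+1) : ℝ) - (m.choose j : ℝ)) * S / ((j+2 : ℕ) : ℝ)
      = ((m+2).choose (j+2) : ℝ) * (((m:ℝ) - (j:ℝ)) / ((m:ℝ)+1)) * S := by
    rw [hcval, hb]
    push_cast
    field_simp
    ring
  rw [hE, show ((m+2:ℕ):ℝ) - ((j+2:ℕ):ℝ) = (m:ℝ) - (j:ℝ) by push_cast; ring,
    show ((m+2:ℕ):ℝ) - 1 = (m:ℝ) + 1 by push_cast; ring]
  push_cast
  field_simp

end Aux

/-- One averaging step over a uniformly random block of random size `X` contracts the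
expected squared `L²` distance to uniform by exactly `1 − (E[X]−1)/(n−1) = 1 − 1/t_rel`:
`E[‖Ψ_A η/π − 1‖₂²] = (1 − (E[X]−1)/(n−1))·‖η/π − 1‖₂²`. -/
theorem repeated_block_averages_l2_contraction
    (V : Type*) [Fintype V] [DecidableEq V] (n : ℕ)
    (hcard : Fintype.card V = n) (hn : 2 ≤ n)
    (p : ℕ → ℝ)
    (hp : ∀ k, 0 ≤ p k)
    (hsupp : ∀ k, k ∉ Finset.Icc 2 n → p k = 0)
    (hsum : ∑ k ∈ Finset.Icc 2 n, p k = 1)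
    (η : V → ℝ) (hnn : ∀ x, 0 ≤ η x) (hη : ∑ x, η x = 1) :
    ∑ k ∈ Finset.Icc 2 n, p k * ((((Finset.univ : Finset V).powersetCard k).card : ℝ)⁻¹ *
        ∑ B ∈ (Finset.univ : Finset V).powersetCard k,
          (1 / (n : ℝ)) * ∑ x, ((n : ℝ) *
              (if x ∈ B then (∑ y ∈ B, η y) / (B.card : ℝ) else η x) - 1) ^ 2) =
      (1 - ((∑ k ∈ Finset.Icc 2 n, (k : ℝ) * p k) - 1) / ((n : ℝ) - 1)) *
        ((1 / (n : ℝ)) * ∑ x, ((n : ℝ) * η x - 1) ^ 2) := by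
  classical
  obtain ⟨m, rfl⟩ : ∃ m, n = m + 2 := ⟨n - 2, by omega⟩
  set S : ℝ := ∑ x, (((m+2:ℕ):ℝ) * η x - 1) ^ 2 with hS
  have hn1 : ((m+2:ℕ) : ℝ) - 1 ≠ 0 := by
    have hm : (0:ℝ) ≤ (m:ℝ) := Nat.cast_nonneg m
    push_cast
    intro h
    linarith
  have perk : ∀ k ∈ Finset.Icc 2 (m+2),
      p k * ((((Finset.univ : Finset V).powersetCard k).card : ℝ)⁻¹ *
        ∑ B ∈ (Finset.univ : Finset V).powersetCard k,
          (1 / ((m+2:ℕ) : ℝ)) * ∑ x, (((m+2:ℕ) : ℝ) *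
              (if x ∈ B then (∑ y ∈ B, η y) / (B.card : ℝ) else η x) - 1) ^ 2)
      = p k * (((((m+2:ℕ):ℝ) - (k:ℝ)) / (((m+2:ℕ):ℝ) - 1)) * ((1 / ((m+2:ℕ):ℝ)) * S)) := by
    intro k hk
    rw [Finset.mem_Icc] at hk
    obtain ⟨j, rfl⟩ : ∃ j, k = j + 2 := ⟨k - 2, by omega⟩
    rw [perk_aux m j hcard (by omega) η hη]
  rw [Finset.sum_congr rfl perk]
  have key : ∀ k : ℕ, p k * (((((m+2:ℕ):ℝ) - (k:ℝ)) / (((m+2:ℕ):ℝ) - 1)) * ((1 / ((m+2:ℕ):ℝ)) * S))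
      = (p k * ((m+2:ℕ):ℝ) - (k : ℝ) * p k) * ((1 / ((m+2:ℕ):ℝ)) * S / (((m+2:ℕ):ℝ) - 1)) := by
    intro k
    field_simp
  rw [Finset.sum_congr rfl (fun k _ => key k), ← Finset.sum_mul, Finset.sum_sub_distrib,
    ← Finset.sum_mul, hsum]
  rw [one_sub_div hn1]
  have hr : ((m+2:ℕ):ℝ) - 1 - ((∑ k ∈ Finset.Icc 2 (m+2), (k:ℝ) * p k) - 1)
      = ((m+2:ℕ):ℝ) - ∑ k ∈ Finset.Icc 2 (m+2), (k:ℝ) * p k := by ring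
  rw [hr]
  field_simp
end

section
/- For the Block Average process with block-size distribution X, the expected relative entropy after one step satisfies E[D(η_1‖π)] − D(η‖π) ≥ −(1/n)·E[X log X], where the block is a uniformly random subset of size X. Consequently, after t steps, E[D(η_t‖π)] ≥ D(η‖π) − t·E[X log X]/n. -/
variable {V : Type*} [Fintype V] [DecidableEq V]

/-- The averaging map over a block `B`. -/
noncomputable def blockAvg (B : Finset V) (η : V → ℝ) : V → ℝ :=
  fun x => if x ∈ B then (∑ y ∈ B, η y) / (B.card : ℝ) else η x

/-- Relative entropy with respect to the uniform distribution on an `n`-point set. -/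
noncomputable def relEntUnif (n : ℕ) (v : V → ℝ) : ℝ :=
  ∑ x, v x * Real.log ((n : ℝ) * v x)

set_option linter.unusedSectionVars false

lemma sum_mul_log_le (s : Finset V) (a : V → ℝ) (ha : ∀ x ∈ s, 0 ≤ a x) :
    ∑ x ∈ s, a x * Real.log (a x) ≤ (∑ x ∈ s, a x) * Real.log (∑ x ∈ s, a x) := by
  rw [Finset.sum_mul]
  apply Finset.sum_le_sum
  intro x hx
  rcases eq_or_lt_of_le (ha x hx) with h | h
  · simp [← h]
  · exact mul_le_mul_of_nonneg_left
      (Real.log_le_log h (Finset.single_le_sum ha hx)) h.le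

lemma blockAvg_nonneg (B : Finset V) (η : V → ℝ) (hnn : ∀ x, 0 ≤ η x) (x : V) :
    0 ≤ blockAvg B η x := by
  unfold blockAvg
  split
  · exact div_nonneg (Finset.sum_nonneg fun y _ => hnn y) (Nat.cast_nonneg _)
  · exact hnn x

lemma blockAvg_sum (B : Finset V) (η : V → ℝ) :
    ∑ x, blockAvg B η x = ∑ x, η x := by
  rcases B.eq_empty_or_nonempty with rfl | hB
  · simp [blockAvg]
  · have hk : (0 : ℝ) < B.card := by exact_mod_cast Finset.card_pos.mpr hB
    have h1 : ∑ x ∈ Finset.univ \ B, blockAvg B η x = ∑ x ∈ Finset.univ \ B, η x := by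
      apply Finset.sum_congr rfl
      intro x hx
      simp only [Finset.mem_sdiff] at hx
      simp [blockAvg, hx.2]
    have h2 : ∑ x ∈ B, blockAvg B η x = ∑ x ∈ B, η x := by
      have : ∀ x ∈ B, blockAvg B η x = (∑ y ∈ B, η y) / (B.card : ℝ) := by
        intro x hx; simp [blockAvg, hx]
      rw [Finset.sum_congr rfl this, Finset.sum_const, nsmul_eq_mul]
      field_simp
    rw [← Finset.sum_sdiff B.subset_univ, h1, h2, Finset.sum_sdiff B.subset_univ]

lemma relEnt_blockAvg_ge (n : ℕ) (hn : 0 < n) (B : Finset V) (η : V → ℝ)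
    (hnn : ∀ x, 0 ≤ η x) :
    relEntUnif n (blockAvg B η) ≥
      relEntUnif n η - (∑ x ∈ B, η x) * Real.log (B.card : ℝ) := by
  rcases B.eq_empty_or_nonempty with rfl | hB
  · simp [blockAvg, relEntUnif]
  · set k : ℝ := (B.card : ℝ) with hkdef
    have hk : (0 : ℝ) < k := by rw [hkdef]; exact_mod_cast Finset.card_pos.mpr hB
    set S : ℝ := ∑ x ∈ B, η x with hSdef
    have hS : 0 ≤ S := Finset.sum_nonneg fun x _ => hnn x
    have hnR : (0 : ℝ) < n := by exact_mod_cast hn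
    have split : ∀ v : V → ℝ, relEntUnif n v =
        (∑ x ∈ Finset.univ \ B, v x * Real.log ((n : ℝ) * v x)) +
        ∑ x ∈ B, v x * Real.log ((n : ℝ) * v x) := by
      intro v; rw [relEntUnif, ← Finset.sum_sdiff B.subset_univ]
    rw [split, split]
    have houtside : ∀ x ∈ Finset.univ \ B,
        blockAvg B η x * Real.log ((n : ℝ) * blockAvg B η x)
          = η x * Real.log ((n : ℝ) * η x) := by
      intro x hx
      simp only [Finset.mem_sdiff] at hx
      simp [blockAvg, hx.2]
    rw [Finset.sum_congr rfl houtside]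
    have hinside : ∑ x ∈ B, blockAvg B η x * Real.log ((n : ℝ) * blockAvg B η x)
        = S * Real.log ((n : ℝ) * (S / k)) := by
      have : ∀ x ∈ B, blockAvg B η x * Real.log ((n : ℝ) * blockAvg B η x)
          = (S / k) * Real.log ((n : ℝ) * (S / k)) := by
        intro x hx; simp [blockAvg, hx, hSdef, hkdef]
      rw [Finset.sum_congr rfl this, Finset.sum_const, nsmul_eq_mul]
      field_simp
      rw [hkdef]; ring
    rw [hinside]
    have key : ∑ x ∈ B, η x * Real.log ((n : ℝ) * η x) ≤ S * Real.log ((n : ℝ) * S) := by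
      have h1 : ∀ x ∈ B, η x * Real.log ((n : ℝ) * η x)
          = (1 / n) * (((n : ℝ) * η x) * Real.log ((n : ℝ) * η x)) := by
        intro x _; field_simp
      rw [Finset.sum_congr rfl h1, ← Finset.mul_sum]
      have h2 := sum_mul_log_le B (fun x => (n : ℝ) * η x)
        (fun x _ => mul_nonneg hnR.le (hnn x))
      have h3 : ∑ x ∈ B, (n : ℝ) * η x = (n : ℝ) * S := by
        rw [← Finset.mul_sum]
      rw [h3] at h2
      calc (1 / (n : ℝ)) * ∑ x ∈ B, ((n : ℝ) * η x) * Real.log ((n : ℝ) * η x)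
          ≤ (1 / n) * (((n : ℝ) * S) * Real.log ((n : ℝ) * S)) := by
            apply mul_le_mul_of_nonneg_left h2 (by positivity)
        _ = S * Real.log ((n : ℝ) * S) := by field_simp
    rcases eq_or_lt_of_le hS with h0 | h0
    · have e1 : S * Real.log ((n:ℝ) * S) = 0 := by rw [← h0]; ring
      rw [e1] at key
      have e2 : S * Real.log ((n : ℝ) * (S / k)) = 0 := by rw [← h0]; ring
      rw [e2]
      have e3 : S * Real.log k = 0 := by rw [← h0]; ring
      linarith
    · have : Real.log ((n : ℝ) * (S / k)) = Real.log ((n : ℝ) * S) - Real.log k := by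
        rw [show (n : ℝ) * (S / k) = ((n : ℝ) * S) / k by ring,
          Real.log_div (by positivity) (ne_of_gt hk)]
      rw [this]
      nlinarith [key]

lemma count_blocks (x : V) (j : ℕ) :
    (((Finset.univ : Finset V).powersetCard (j+1)).filter (fun B => x ∈ B)).card
      = (Fintype.card V - 1).choose j := by
  have himg : ((Finset.univ : Finset V).powersetCard (j+1)).filter (fun B => x ∈ B)
      = ((Finset.univ.erase x).powersetCard j).image (insert x) := by
    ext B
    simp only [Finset.mem_filter, Finset.mem_image, Finset.mem_powersetCard]
    constructor
    · rintro ⟨⟨-, hcard⟩, hx⟩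
      refine ⟨B.erase x, ⟨fun y hy => ?_, ?_⟩, ?_⟩
      · rcases Finset.mem_erase.mp hy with ⟨hne, _⟩
        exact Finset.mem_erase.mpr ⟨hne, Finset.mem_univ y⟩
      · rw [Finset.card_erase_of_mem hx, hcard]; rfl
      · exact Finset.insert_erase hx
    · rintro ⟨C, ⟨hC, hcard⟩, rfl⟩
      have hxC : x ∉ C := fun h => (Finset.mem_erase.mp (hC h)).1 rfl
      exact ⟨⟨Finset.subset_univ _, by rw [Finset.card_insert_of_notMem hxC, hcard]⟩,
        Finset.mem_insert_self x _⟩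
  rw [himg, Finset.card_image_of_injOn, Finset.card_powersetCard,
    Finset.card_erase_of_mem (Finset.mem_univ x), Finset.card_univ]
  intro C hC D hD h
  have hxC : x ∉ C := fun hxc => (Finset.mem_erase.mp
    ((Finset.mem_powersetCard.mp hC).1 hxc)).1 rfl
  have hxD : x ∉ D := fun hxd => (Finset.mem_erase.mp
    ((Finset.mem_powersetCard.mp hD).1 hxd)).1 rfl
  have := congrArg (fun S => Finset.erase S x) h
  simpa [Finset.erase_insert hxC, Finset.erase_insert hxD] using this

lemma sum_block_mass (η : V → ℝ) (j : ℕ) :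
    ∑ B ∈ (Finset.univ : Finset V).powersetCard (j+1), ∑ x ∈ B, η x
      = ((Fintype.card V - 1).choose j : ℝ) * ∑ x, η x := by
  have h1 : ∀ B ∈ (Finset.univ : Finset V).powersetCard (j+1),
      ∑ x ∈ B, η x = ∑ x, if x ∈ B then η x else 0 := by
    intro B _
    rw [Finset.sum_ite_mem]
    congr 1
    exact (Finset.univ_inter B).symm
  rw [Finset.sum_congr rfl h1, Finset.sum_comm]
  rw [Finset.mul_sum]
  apply Finset.sum_congr rfl
  intro x _
  rw [Finset.sum_ite, Finset.sum_const_zero, add_zero, Finset.sum_const,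
    count_blocks x j, nsmul_eq_mul, mul_comm]

lemma choose_ratio (n k : ℕ) (hn : 1 ≤ n) (hk : 1 ≤ k) (hkn : k ≤ n) :
    ((n - 1).choose (k - 1) : ℝ) = (k : ℝ) / (n : ℝ) * (n.choose k : ℝ) := by
  obtain ⟨m, rfl⟩ := Nat.exists_eq_add_of_le hn
  obtain ⟨j, rfl⟩ := Nat.exists_eq_add_of_le hk
  have h := Nat.add_one_mul_choose_eq m j
  have hn0 : ((1 + m : ℕ) : ℝ) ≠ 0 := by positivity
  have : ((1 + m : ℕ) : ℝ) * ((m.choose j : ℕ) : ℝ)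
      = (((1 + m : ℕ).choose (1 + j) : ℕ) : ℝ) * ((1 + j : ℕ) : ℝ) := by
    rw [show 1 + m = Nat.succ m by omega, show 1 + j = j + 1 by omega]
    exact_mod_cast congrArg (Nat.cast (R := ℝ)) h
  rw [Nat.add_sub_cancel_left, Nat.add_sub_cancel_left]
  field_simp
  push_cast at this ⊢
  linear_combination this

lemma avg_step (n : ℕ) (hcard : Fintype.card V = n) (hn : 2 ≤ n) (k : ℕ)
    (hk1 : 1 ≤ k) (hk2 : k ≤ n) (η : V → ℝ) (hnn : ∀ x, 0 ≤ η x) (hη : ∑ x, η x = 1) :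
    ((((Finset.univ : Finset V).powersetCard k).card : ℝ)⁻¹ *
        ∑ B ∈ (Finset.univ : Finset V).powersetCard k, relEntUnif n (blockAvg B η))
      ≥ relEntUnif n η - (k : ℝ) / n * Real.log k := by
  have hC : (((Finset.univ : Finset V).powersetCard k).card : ℕ) = n.choose k := by
    rw [Finset.card_powersetCard, Finset.card_univ, hcard]
  have hCpos : (0 : ℝ) < (((Finset.univ : Finset V).powersetCard k).card : ℝ) := by
    rw [hC]; exact_mod_cast Nat.choose_pos hk2
  obtain ⟨j, rfl⟩ : ∃ j, k = j + 1 := ⟨k - 1, by omega⟩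
  have hmass : ∑ B ∈ (Finset.univ : Finset V).powersetCard (j+1), ∑ x ∈ B, η x
      = ((n - 1).choose j : ℝ) := by
    rw [sum_block_mass, hη, mul_one, hcard]
  have hlower : ∑ B ∈ (Finset.univ : Finset V).powersetCard (j+1), relEntUnif n (blockAvg B η)
      ≥ ∑ B ∈ (Finset.univ : Finset V).powersetCard (j+1),
          (relEntUnif n η - (∑ x ∈ B, η x) * Real.log ((j+1 : ℕ) : ℝ)) := by
    apply Finset.sum_le_sum
    intro B hB
    have hBcard : B.card = j + 1 := (Finset.mem_powersetCard.mp hB).2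
    have := relEnt_blockAvg_ge n (by omega) B η hnn
    rw [hBcard] at this
    exact this
  have hrhs : ∑ B ∈ (Finset.univ : Finset V).powersetCard (j+1),
      (relEntUnif n η - (∑ x ∈ B, η x) * Real.log ((j+1 : ℕ) : ℝ))
      = (((Finset.univ : Finset V).powersetCard (j+1)).card : ℝ) * relEntUnif n η
        - ((n-1).choose j : ℝ) * Real.log ((j+1 : ℕ) : ℝ) := by
    rw [Finset.sum_sub_distrib, Finset.sum_const, ← Finset.sum_mul, hmass, nsmul_eq_mul]
  have hratio : ((n - 1).choose j : ℝ) = ((j+1 : ℕ) : ℝ) / (n : ℝ)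
      * ((((Finset.univ : Finset V).powersetCard (j+1)).card : ℝ)) := by
    rw [hC]
    exact_mod_cast choose_ratio n (j+1) (by omega) (by omega) hk2
  set C : ℝ := (((Finset.univ : Finset V).powersetCard (j+1)).card : ℝ)
  set Sd : ℝ := ∑ B ∈ (Finset.univ : Finset V).powersetCard (j+1), relEntUnif n (blockAvg B η)
  rw [hrhs, hratio] at hlower
  have hCne : C ≠ 0 := ne_of_gt hCpos
  rw [ge_iff_le, ← sub_nonneg]
  have expand : C⁻¹ * Sd - (relEntUnif n η - (↑(j+1) : ℝ) / ↑n * Real.log ↑(j+1))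
      = C⁻¹ * (Sd - (C * relEntUnif n η - ↑(j+1) / ↑n * C * Real.log ↑(j+1))) := by
    field_simp
  rw [expand]
  apply mul_nonneg (le_of_lt (inv_pos.mpr hCpos))
  have : ↑(j+1) / (↑n:ℝ) * C * Real.log ↑(j+1) = ↑(j+1) / ↑n * Real.log ↑(j+1) * C := by ring
  linarith [hlower]

lemma regroup (n : ℕ) (hcard : Fintype.card V = n) (f : Finset V → ℝ) :
    ∑ B : Finset V, f B
      = ∑ k ∈ Finset.range (n+1), ∑ B ∈ (Finset.univ : Finset V).powersetCard k, f B := by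
  have h0 : ∑ B : Finset V, f B = ∑ B ∈ (Finset.univ : Finset V).powerset, f B := by
    rw [Finset.powerset_univ]
  rw [h0, ← Finset.sum_fiberwise_of_maps_to (g := Finset.card)
    (t := Finset.range (n+1)) (fun B _ => Finset.mem_range.mpr (by
      rw [← hcard]; exact Nat.lt_succ_of_le (Finset.card_le_univ B)))]
  apply Finset.sum_congr rfl
  intro k _
  apply Finset.sum_congr _ (fun _ _ => rfl)
  rw [Finset.powersetCard_eq_filter]

/-- The expected relative entropy of the Block Average process decreases by at most
`E[X log X]/n` per step: the one-step bound
`E[D(η₁‖π)] − D(η‖π) ≥ −(1/n)·E[X log X]`, and consequently, for every `t`,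
`E[D(η_t‖π)] ≥ D(η‖π) − t·E[X log X]/n`, where the expectation over the random
blocks weighs a block `B` by `p(|B|)/C(n,|B|)`. -/
theorem repeated_block_averages_entropy_lower_bound
    (n : ℕ) (hcard : Fintype.card V = n) (hn : 2 ≤ n)
    (p : ℕ → ℝ)
    (hp : ∀ k, 0 ≤ p k)
    (hsupp : ∀ k, k ∉ Finset.Icc 2 n → p k = 0)
    (hsum : ∑ k ∈ Finset.Icc 2 n, p k = 1)
    (η : V → ℝ) (hnn : ∀ x, 0 ≤ η x) (hη : ∑ x, η x = 1)
    (EXlogX : ℝ)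
    (hEXlogX : EXlogX = ∑ k ∈ Finset.Icc 2 n, (k : ℝ) * Real.log k * p k) :
    (∑ k ∈ Finset.Icc 2 n, p k * ((((Finset.univ : Finset V).powersetCard k).card : ℝ)⁻¹ *
          ∑ B ∈ (Finset.univ : Finset V).powersetCard k, relEntUnif n (blockAvg B η))) -
        relEntUnif n η ≥ -(1 / (n : ℝ)) * EXlogX ∧
      ∀ t : ℕ,
        (∑ bs : Fin t → Finset V,
            (∏ s : Fin t, p (bs s).card / (((Finset.univ : Finset V).powersetCard (bs s).card).card : ℝ)) *
              relEntUnif n ((List.ofFn bs).foldl (fun v B => blockAvg B v) η)) ≥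
          relEntUnif n η - (t : ℝ) * EXlogX / n := by
  have hnR : (0 : ℝ) < n := by positivity
  -- weight of a block
  set w : Finset V → ℝ :=
    fun B => p B.card / (((Finset.univ : Finset V).powersetCard B.card).card : ℝ) with hw
  have hCpos : ∀ k ∈ Finset.Icc 2 n,
      (0 : ℝ) < (((Finset.univ : Finset V).powersetCard k).card : ℝ) := by
    intro k hk
    rw [Finset.mem_Icc] at hk
    rw [Finset.card_powersetCard, Finset.card_univ, hcard]
    exact_mod_cast Nat.choose_pos hk.2
  -- generic: lower bound for ∑ k p k * (avg over blocks of size k of g)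
  have hrhs_sum : ∀ v : V → ℝ, (∀ x, 0 ≤ v x) → (∑ x, v x = 1) →
      ∑ k ∈ Finset.Icc 2 n, p k *
        ((((Finset.univ : Finset V).powersetCard k).card : ℝ)⁻¹ *
          ∑ B ∈ (Finset.univ : Finset V).powersetCard k, relEntUnif n (blockAvg B v))
      ≥ relEntUnif n v - EXlogX / n := by
    intro v hv1 hv2
    have step1 : ∑ k ∈ Finset.Icc 2 n, p k *
        ((((Finset.univ : Finset V).powersetCard k).card : ℝ)⁻¹ *
          ∑ B ∈ (Finset.univ : Finset V).powersetCard k, relEntUnif n (blockAvg B v))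
        ≥ ∑ k ∈ Finset.Icc 2 n, p k * (relEntUnif n v - (k : ℝ)/n * Real.log k) := by
      apply Finset.sum_le_sum
      intro k hk
      rw [Finset.mem_Icc] at hk
      exact mul_le_mul_of_nonneg_left
        (avg_step n hcard hn k (by omega) hk.2 v hv1 hv2) (hp k)
    have step2 : ∑ k ∈ Finset.Icc 2 n, p k * (relEntUnif n v - (k : ℝ)/n * Real.log k)
        = relEntUnif n v - EXlogX / n := by
      have : ∀ k ∈ Finset.Icc 2 n, p k * (relEntUnif n v - (k : ℝ)/n * Real.log k)
          = p k * relEntUnif n v - ((k : ℝ) * Real.log k * p k) / n := by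
        intro k _; field_simp
      rw [Finset.sum_congr rfl this, Finset.sum_sub_distrib, ← Finset.sum_mul, hsum,
        one_mul, ← Finset.sum_div, ← hEXlogX]
    linarith
  have part1 : (∑ k ∈ Finset.Icc 2 n, p k *
      ((((Finset.univ : Finset V).powersetCard k).card : ℝ)⁻¹ *
        ∑ B ∈ (Finset.univ : Finset V).powersetCard k, relEntUnif n (blockAvg B η))) -
      relEntUnif n η ≥ -(1 / (n : ℝ)) * EXlogX := by
    have := hrhs_sum η hnn hη
    have hdiv : EXlogX / n = (1 / (n : ℝ)) * EXlogX := by ring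
    linarith [this]
  refine ⟨part1, ?_⟩
  -- ungrouped one-step bound
  have onestep : ∀ v : V → ℝ, (∀ x, 0 ≤ v x) → (∑ x, v x = 1) →
      ∑ B : Finset V, w B * relEntUnif n (blockAvg B v)
        ≥ relEntUnif n v - EXlogX / n := by
    intro v hv1 hv2
    rw [regroup n hcard]
    have hsubset : Finset.Icc 2 n ⊆ Finset.range (n+1) := by
      intro k hk; rw [Finset.mem_Icc] at hk; exact Finset.mem_range.mpr (by omega)
    rw [← Finset.sum_subset hsubset (fun k _ hk => by
      apply Finset.sum_eq_zero
      intro B hB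
      have : B.card = k := (Finset.mem_powersetCard.mp hB).2
      rw [hw]
      simp only [this, hsupp k hk, zero_div, zero_mul])]
    have : ∀ k ∈ Finset.Icc 2 n,
        ∑ B ∈ (Finset.univ : Finset V).powersetCard k, w B * relEntUnif n (blockAvg B v)
        = p k * ((((Finset.univ : Finset V).powersetCard k).card : ℝ)⁻¹ *
            ∑ B ∈ (Finset.univ : Finset V).powersetCard k, relEntUnif n (blockAvg B v)) := by
      intro k hk
      rw [Finset.mul_sum, Finset.mul_sum]
      apply Finset.sum_congr rfl
      intro B hB
      have hBc : B.card = k := (Finset.mem_powersetCard.mp hB).2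
      rw [hw]
      simp only [hBc]
      rw [div_eq_mul_inv]
      ring
    rw [Finset.sum_congr rfl this]
    exact hrhs_sum v hv1 hv2
  -- weights sum to 1
  have wsum : ∑ B : Finset V, w B = 1 := by
    rw [regroup n hcard]
    have hsubset : Finset.Icc 2 n ⊆ Finset.range (n+1) := by
      intro k hk; rw [Finset.mem_Icc] at hk; exact Finset.mem_range.mpr (by omega)
    rw [← Finset.sum_subset hsubset (fun k _ hk => by
      apply Finset.sum_eq_zero
      intro B hB
      have : B.card = k := (Finset.mem_powersetCard.mp hB).2
      rw [hw]
      simp only [this, hsupp k hk, zero_div])]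
    rw [← hsum]
    apply Finset.sum_congr rfl
    intro k hk
    have hC := hCpos k hk
    have : ∀ B ∈ (Finset.univ : Finset V).powersetCard k,
        w B = p k / (((Finset.univ : Finset V).powersetCard k).card : ℝ) := by
      intro B hB
      have hBc : B.card = k := (Finset.mem_powersetCard.mp hB).2
      rw [hw]; simp only [hBc]
    rw [Finset.sum_congr rfl this, Finset.sum_const, nsmul_eq_mul,
      mul_div_cancel₀ _ (ne_of_gt hC)]
  have wnn : ∀ B : Finset V, 0 ≤ w B := by
    intro B
    exact div_nonneg (hp _) (Nat.cast_nonneg _)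
  -- the induction
  have key : ∀ t : ℕ, ∀ v : V → ℝ, (∀ x, 0 ≤ v x) → (∑ x, v x = 1) →
      (∑ bs : Fin t → Finset V,
          (∏ s : Fin t, w (bs s)) *
            relEntUnif n ((List.ofFn bs).foldl (fun u B => blockAvg B u) v)) ≥
        relEntUnif n v - (t : ℝ) * EXlogX / n := by
    intro t
    induction t with
    | zero =>
      intro v hv1 hv2
      simp
    | succ t ih =>
      intro v hv1 hv2
      have decomp : (∑ bs : Fin (t+1) → Finset V,
          (∏ s : Fin (t+1), w (bs s)) *
            relEntUnif n ((List.ofFn bs).foldl (fun u B => blockAvg B u) v))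
          = ∑ B : Finset V, w B * ∑ bs : Fin t → Finset V,
              (∏ s : Fin t, w (bs s)) *
                relEntUnif n ((List.ofFn bs).foldl (fun u B => blockAvg B u) (blockAvg B v)) := by
        rw [← (Fin.consEquiv (fun _ : Fin (t+1) => Finset V)).sum_comp
          (fun bs : Fin (t+1) → Finset V =>
            (∏ s : Fin (t+1), w (bs s)) *
              relEntUnif n ((List.ofFn bs).foldl (fun u B => blockAvg B u) v))]
        rw [Fintype.sum_prod_type]
        apply Finset.sum_congr rfl
        intro B _
        rw [Finset.mul_sum]
        apply Finset.sum_congr rfl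
        intro bs _
        have h1 : (List.ofFn ((Fin.consEquiv (fun _ : Fin (t+1) => Finset V)) (B, bs)))
            = B :: List.ofFn bs := by
          rw [List.ofFn_succ]
          congr 1
        have h2 : ∏ s : Fin (t+1), w (((Fin.consEquiv (fun _ : Fin (t+1) => Finset V)) (B, bs)) s)
            = w B * ∏ s : Fin t, w (bs s) := by
          rw [Fin.prod_univ_succ]
          congr 1
        rw [h1, h2, List.foldl_cons]
        ring
      rw [decomp]
      have hge : ∀ B : Finset V,
          w B * (∑ bs : Fin t → Finset V,
              (∏ s : Fin t, w (bs s)) *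
                relEntUnif n ((List.ofFn bs).foldl (fun u B => blockAvg B u) (blockAvg B v)))
            ≥ w B * (relEntUnif n (blockAvg B v) - (t : ℝ) * EXlogX / n) := by
        intro B
        apply mul_le_mul_of_nonneg_left _ (wnn B)
        apply ih
        · exact blockAvg_nonneg B v hv1
        · rw [blockAvg_sum]; exact hv2
      have sum_ge : ∑ B : Finset V, w B * (∑ bs : Fin t → Finset V,
              (∏ s : Fin t, w (bs s)) *
                relEntUnif n ((List.ofFn bs).foldl (fun u B => blockAvg B u) (blockAvg B v)))
            ≥ ∑ B : Finset V, w B * (relEntUnif n (blockAvg B v) - (t : ℝ) * EXlogX / n) :=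
        Finset.sum_le_sum (fun B _ => hge B)
      have expand : ∑ B : Finset V, w B * (relEntUnif n (blockAvg B v) - (t : ℝ) * EXlogX / n)
          = (∑ B : Finset V, w B * relEntUnif n (blockAvg B v)) - (t : ℝ) * EXlogX / n := by
        have h1 : ∀ B ∈ (Finset.univ : Finset (Finset V)),
            w B * (relEntUnif n (blockAvg B v) - (t : ℝ) * EXlogX / n)
              = w B * relEntUnif n (blockAvg B v) - w B * ((t : ℝ) * EXlogX / n) := by
          intro B _; ring
        rw [Finset.sum_congr rfl h1, Finset.sum_sub_distrib, ← Finset.sum_mul, wsum, one_mul]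
      have one := onestep v hv1 hv2
      have harith : (((t+1 : ℕ)) : ℝ) * EXlogX / n = (t : ℝ) * EXlogX / n + EXlogX / n := by
        push_cast; ring
      rw [ge_iff_le, harith]
      linarith [sum_ge, one]
  intro t
  exact key t η hnn hη
end

section
/- Suppose X takes values in {2,...,n} and satisfies μ := E[X log X]/E[X] ≪ log n and σ² := E[X(log X)²]/E[X] − μ² ≪ μ log n (as n → ∞). Then E[X²]/E[X log X] = o(n/log n), and hence t_ent · E[X²] = o(n²) where t_ent = n log n / E[X log X]. -/
open Filter Asymptotics

set_option maxHeartbeats 800000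

private lemma sqrt_tendsto_atTop' : Tendsto Real.sqrt atTop atTop := by
  apply tendsto_atTop_atTop.mpr
  intro b
  refine ⟨(max b 0) ^ 2, fun a ha => ?_⟩
  have h0 : 0 ≤ max b 0 := le_max_right _ _
  calc b ≤ max b 0 := le_max_left _ _
    _ = Real.sqrt ((max b 0) ^ 2) := by rw [Real.sqrt_sq h0]
    _ ≤ Real.sqrt a := Real.sqrt_le_sqrt ha

private lemma sqrt_log_div_tendsto :
    Tendsto (fun x : ℝ => Real.sqrt x * Real.log x / x) atTop (nhds 0) := by
  have h1 : Tendsto (fun x : ℝ => Real.log x / x) atTop (nhds 0) :=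
    Real.isLittleO_log_id_atTop.tendsto_div_nhds_zero
  have h2 : Tendsto (fun x : ℝ => 2 * (Real.log (Real.sqrt x) / Real.sqrt x)) atTop
      (nhds 0) := by
    have := (h1.comp sqrt_tendsto_atTop').const_mul (2 : ℝ)
    simpa using this
  apply h2.congr'
  filter_upwards [eventually_ge_atTop (1 : ℝ)] with x hx
  have hx0 : (0:ℝ) < x := lt_of_lt_of_le one_pos hx
  have hs : Real.sqrt x ≠ 0 := by positivity
  rw [Real.log_sqrt hx0.le]
  rw [show Real.sqrt x * Real.log x / x = Real.sqrt x * Real.log x / (Real.sqrt x * Real.sqrt x) by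
    rw [Real.mul_self_sqrt hx0.le]]
  rw [mul_div_mul_left _ _ hs]
  ring

/-- Lemma 5.1: if `μ = E[X log X]/E[X] ≪ log n` and
`σ² = E[X(log X)²]/E[X] − μ² ≪ μ log n`, then `E[X²]/E[X log X] = o(n/log n)`; hence
`t_ent·E[X²] = o(n²)` where `t_ent = n log n / E[X log X]`. -/
theorem repeated_block_averages_second_moment_small
    (p : ℕ → ℕ → ℝ)
    (hp : ∀ n k, 0 ≤ p n k)
    (hsupp : ∀ n k, k ∉ Finset.Icc 2 n → p n k = 0)
    (hsum : ∀ n, 2 ≤ n → ∑ k ∈ Finset.Icc 2 n, p n k = 1)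
    (EX EXlogX EXlog2 EX2 μ σsq : ℕ → ℝ)
    (hEX : ∀ n, EX n = ∑ k ∈ Finset.Icc 2 n, (k : ℝ) * p n k)
    (hEXlogX : ∀ n, EXlogX n = ∑ k ∈ Finset.Icc 2 n, (k : ℝ) * Real.log k * p n k)
    (hEXlog2 : ∀ n, EXlog2 n = ∑ k ∈ Finset.Icc 2 n, (k : ℝ) * (Real.log k) ^ 2 * p n k)
    (hEX2 : ∀ n, EX2 n = ∑ k ∈ Finset.Icc 2 n, ((k : ℝ)) ^ 2 * p n k)
    (hμ : ∀ n, μ n = EXlogX n / EX n)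
    (hσ : ∀ n, σsq n = EXlog2 n / EX n - (μ n) ^ 2)
    (hμsmall : Tendsto (fun n => μ n / Real.log n) atTop (nhds 0))
    (hσsmall : Tendsto (fun n => σsq n / (μ n * Real.log n)) atTop (nhds 0)) :
    (fun n => EX2 n / EXlogX n) =o[atTop] (fun n : ℕ => (n : ℝ) / Real.log n) ∧
      (fun n : ℕ => ((n : ℝ) * Real.log n / EXlogX n) * EX2 n) =o[atTop]
        (fun n : ℕ => ((n : ℝ)) ^ 2) := by
  have h2pos : (0:ℝ) < Real.log 2 := Real.log_pos (by norm_num)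
  -- basic positivity facts for n ≥ 2
  have hEXge : ∀ n : ℕ, 2 ≤ n → (2:ℝ) ≤ EX n := by
    intro n hn
    rw [hEX]
    calc (2:ℝ) = ∑ k ∈ Finset.Icc 2 n, 2 * p n k := by
          rw [← Finset.mul_sum, hsum n hn, mul_one]
      _ ≤ _ := by
          apply Finset.sum_le_sum
          intro k hk
          have hk2 : (2:ℝ) ≤ (k:ℝ) := by exact_mod_cast (Finset.mem_Icc.mp hk).1
          exact mul_le_mul_of_nonneg_right hk2 (hp n k)
  have hLge : ∀ n : ℕ, 2 ≤ n → Real.log 2 * EX n ≤ EXlogX n := by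
    intro n hn
    rw [hEXlogX, hEX, Finset.mul_sum]
    apply Finset.sum_le_sum
    intro k hk
    have hk2 : (2:ℝ) ≤ (k:ℝ) := by exact_mod_cast (Finset.mem_Icc.mp hk).1
    have hlog : Real.log 2 ≤ Real.log k := Real.log_le_log (by norm_num) hk2
    have hk0 : (0:ℝ) ≤ (k:ℝ) := by linarith
    have h := mul_le_mul_of_nonneg_right (mul_le_mul_of_nonneg_right hlog hk0) (hp n k)
    nlinarith [h]
  have hLpos : ∀ n : ℕ, 2 ≤ n → 0 < EXlogX n := by
    intro n hn
    have h1 := hEXge n hn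
    have h2 := hLge n hn
    nlinarith
  have hEXpos : ∀ n : ℕ, 2 ≤ n → 0 < EX n := fun n hn => by linarith [hEXge n hn]
  have hμpos : ∀ n : ℕ, 2 ≤ n → 0 < μ n := by
    intro n hn
    rw [hμ]
    exact div_pos (hLpos n hn) (hEXpos n hn)
  have hQeq : ∀ n : ℕ, 2 ≤ n → EXlog2 n = EX n * (σsq n + (μ n)^2) := by
    intro n hn
    have hE := (hEXpos n hn).ne'
    have h : EXlog2 n / EX n = σsq n + (μ n)^2 := by linarith [hσ n]
    rw [div_eq_iff hE] at h
    rw [h]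
    ring
  have hEX2nonneg : ∀ n : ℕ, 0 ≤ EX2 n := by
    intro n
    rw [hEX2]
    apply Finset.sum_nonneg
    intro k hk
    exact mul_nonneg (by positivity) (hp n k)
  -- the key splitting bound
  have hKey : ∀ n : ℕ, 2 ≤ n → EX2 n ≤
      (Real.sqrt n / Real.log 2) * EXlogX n +
        ((n:ℝ) / (Real.log (Real.sqrt n))^2) * EXlog2 n := by
    intro n hn
    have hn2 : (2:ℝ) ≤ (n:ℝ) := by exact_mod_cast hn
    have hsq1 : (1:ℝ) < Real.sqrt n := by
      rw [show (1:ℝ) = Real.sqrt 1 by simp]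
      exact Real.sqrt_lt_sqrt (by norm_num) (by linarith)
    have hsqpos : (0:ℝ) < Real.sqrt n := by linarith
    have hlogsq : 0 < Real.log (Real.sqrt n) := Real.log_pos hsq1
    rw [hEX2, hEXlogX, hEXlog2, Finset.mul_sum, Finset.mul_sum, ← Finset.sum_add_distrib]
    apply Finset.sum_le_sum
    intro k hk
    obtain ⟨hk2n, hkn⟩ := Finset.mem_Icc.mp hk
    have hk2 : (2:ℝ) ≤ (k:ℝ) := by exact_mod_cast hk2n
    have hkn' : (k:ℝ) ≤ (n:ℝ) := by exact_mod_cast hkn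
    have hk0 : (0:ℝ) < (k:ℝ) := by linarith
    have hlogk : Real.log 2 ≤ Real.log k := Real.log_le_log (by norm_num) hk2
    have hlogk0 : 0 < Real.log k := lt_of_lt_of_le h2pos hlogk
    have hcore : (k:ℝ)^2 ≤ (Real.sqrt n / Real.log 2) * ((k:ℝ) * Real.log k) +
        ((n:ℝ) / (Real.log (Real.sqrt n))^2) * ((k:ℝ) * (Real.log k)^2) := by
      rcases le_or_gt (k:ℝ) (Real.sqrt n) with hcase | hcase
      · have h1 : (k:ℝ)^2 ≤ Real.sqrt n * (k:ℝ) := by nlinarith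
        have h2 : Real.sqrt n * (k:ℝ) ≤ (Real.sqrt n / Real.log 2) * ((k:ℝ) * Real.log k) := by
          rw [div_mul_eq_mul_div, le_div_iff₀ h2pos]
          nlinarith
        have h3 : 0 ≤ ((n:ℝ) / (Real.log (Real.sqrt n))^2) * ((k:ℝ) * (Real.log k)^2) := by
          positivity
        linarith
      · have h1 : (k:ℝ)^2 ≤ (n:ℝ) * (k:ℝ) := by nlinarith
        have hlogsqk : Real.log (Real.sqrt n) ≤ Real.log k :=
          Real.log_le_log hsqpos hcase.le
        have h2 : (n:ℝ) * (k:ℝ) ≤ ((n:ℝ) / (Real.log (Real.sqrt n))^2) *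
            ((k:ℝ) * (Real.log k)^2) := by
          rw [div_mul_eq_mul_div, le_div_iff₀ (by positivity)]
          have hsq2 : (Real.log (Real.sqrt n))^2 ≤ (Real.log k)^2 := by nlinarith
          nlinarith [mul_le_mul_of_nonneg_left hsq2 (by positivity : (0:ℝ) ≤ (n:ℝ) * (k:ℝ))]
        have h3 : 0 ≤ (Real.sqrt n / Real.log 2) * ((k:ℝ) * Real.log k) := by positivity
        linarith
    have := mul_le_mul_of_nonneg_right hcore (hp n k)
    calc (k:ℝ)^2 * p n k
        ≤ ((Real.sqrt n / Real.log 2) * ((k:ℝ) * Real.log k) +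
          ((n:ℝ) / (Real.log (Real.sqrt n))^2) * ((k:ℝ) * (Real.log k)^2)) * p n k := this
      _ = (Real.sqrt n / Real.log 2) * ((k:ℝ) * Real.log k * p n k) +
          ((n:ℝ) / (Real.log (Real.sqrt n))^2) * ((k:ℝ) * (Real.log k)^2 * p n k) := by ring
  -- the ratio bound
  set b : ℕ → ℝ := fun n => Real.sqrt n * Real.log n / ((n:ℝ) * Real.log 2)
      + 4 * (σsq n / (μ n * Real.log n)) + 4 * (μ n / Real.log n) with hb
  have hratio : ∀ᶠ n : ℕ in atTop, (EX2 n / EXlogX n) / ((n:ℝ) / Real.log n) ≤ b n := by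
    filter_upwards [eventually_ge_atTop 2] with n hn
    have hn2 : (2:ℝ) ≤ (n:ℝ) := by exact_mod_cast hn
    have hn0 : (0:ℝ) < (n:ℝ) := by linarith
    have hlogn : 0 < Real.log n := Real.log_pos (by linarith)
    have hL := hLpos n hn
    have hE := hEXpos n hn
    have hc : (0:ℝ) ≤ Real.log n / (EXlogX n * (n:ℝ)) := by positivity
    have heq1 : (EX2 n / EXlogX n) / ((n:ℝ) / Real.log n)
        = EX2 n * (Real.log n / (EXlogX n * (n:ℝ))) := by
      field_simp
    rw [heq1]
    have step := mul_le_mul_of_nonneg_right (hKey n hn) hc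
    refine le_trans step (le_of_eq ?_)
    have hE' : EX n ≠ 0 := hE.ne'
    have hL' : EXlogX n ≠ 0 := hL.ne'
    simp only [hb]
    rw [hQeq n hn, Real.log_sqrt hn0.le, hμ]
    field_simp
    ring
  have hratio0 : ∀ᶠ n : ℕ in atTop, 0 ≤ (EX2 n / EXlogX n) / ((n:ℝ) / Real.log n) := by
    filter_upwards [eventually_ge_atTop 2] with n hn
    have hn2 : (2:ℝ) ≤ (n:ℝ) := by exact_mod_cast hn
    have hlogn : 0 < Real.log n := Real.log_pos (by linarith)
    have := hEX2nonneg n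
    have hL := hLpos n hn
    positivity
  -- b tends to 0
  have hbtend : Tendsto b atTop (nhds 0) := by
    have ht1 : Tendsto (fun n : ℕ => Real.sqrt n * Real.log n / ((n:ℝ) * Real.log 2)) atTop
        (nhds 0) := by
      have hcomp := sqrt_log_div_tendsto.comp (tendsto_natCast_atTop_atTop (R := ℝ))
      have := hcomp.const_mul (1 / Real.log 2)
      rw [mul_zero] at this
      apply this.congr
      intro n
      simp only [Function.comp]
      field_simp
    have ht2 : Tendsto (fun n : ℕ => 4 * (σsq n / (μ n * Real.log n))) atTop (nhds 0) := by
      have := hσsmall.const_mul (4:ℝ)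
      simpa using this
    have ht3 : Tendsto (fun n : ℕ => 4 * (μ n / Real.log n)) atTop (nhds 0) := by
      have := hμsmall.const_mul (4:ℝ)
      simpa using this
    have := (ht1.add ht2).add ht3
    simpa [hb] using this
  have hsqueeze : Tendsto (fun n : ℕ => (EX2 n / EXlogX n) / ((n:ℝ) / Real.log n)) atTop
      (nhds 0) := squeeze_zero' hratio0 hratio hbtend
  have hfirst : (fun n => EX2 n / EXlogX n) =o[atTop] (fun n : ℕ => (n : ℝ) / Real.log n) := by
    rw [isLittleO_iff_tendsto']
    · exact hsqueeze
    · filter_upwards [eventually_ge_atTop 2] with n hn h0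
      exfalso
      have hn2 : (2:ℝ) ≤ (n:ℝ) := by exact_mod_cast hn
      have hlogn : 0 < Real.log n := Real.log_pos (by linarith)
      have : (0:ℝ) < (n:ℝ) / Real.log n := by positivity
      linarith [this.ne' h0]
  refine ⟨hfirst, ?_⟩
  have h2 := hfirst.mul_isBigO (isBigO_refl (fun n : ℕ => (n:ℝ) * Real.log n) atTop)
  have heq1 : (fun n : ℕ => ((n:ℝ) * Real.log n / EXlogX n) * EX2 n)
      = fun n : ℕ => (EX2 n / EXlogX n) * ((n:ℝ) * Real.log n) := by
    funext n; ring
  rw [heq1]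
  have hg : (fun n : ℕ => ((n:ℝ) / Real.log n) * ((n:ℝ) * Real.log n))
      =ᶠ[atTop] (fun n : ℕ => ((n:ℝ)) ^ 2) := by
    filter_upwards [eventually_ge_atTop 2] with n hn
    have hn2 : (2:ℝ) ≤ (n:ℝ) := by exact_mod_cast hn
    have hlogn : Real.log n ≠ 0 := (Real.log_pos (by linarith)).ne'
    field_simp
  exact h2.trans_eventuallyEq hg
end
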